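/- arXiv:1403.5031 — 6 statements merged into one kernel-verified Lean document; each statement's English description precedes it below -/
import Mathlib

section
/- For p, q ∈ [1,∞] with 1/p + 1/q = 1, and for any complex n×n matrix A and vectors x, y ∈ ℂⁿ, one has ‖diag(x)·A·y‖_p ≤ (max over rows h of ‖A_{h•}‖_q) · ‖x‖_p · ‖y‖_p. -/
/-!
Hölder's inequality applied to each row gives `|(A y)_h| ≤ ‖A_{h•}‖_q ‖y‖_p`, hence
`‖A y‖_∞ ≤ (max_h ‖A_{h•}‖_q) ‖y‖_p`. Hölder's inequality for the exponent triple `(p, ∞, p)` then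
bounds `‖diag(x) A y‖_p = ‖x ⊙ A y‖_p` by `‖x‖_p ‖A y‖_∞`.
-/

open scoped ENNReal

namespace PiLp

variable {ι 𝕜 : Type*} [Fintype ι] [RCLike 𝕜]

theorem norm_toLp_mul_le {p q r : ℝ≥0∞} [Fact (1 ≤ p)] [Fact (1 ≤ q)] [Fact (1 ≤ r)]
    [p.HolderTriple q r] (e f : ι → 𝕜) :
    ‖WithLp.toLp r (e * f)‖ ≤ ‖WithLp.toLp p e‖ * ‖WithLp.toLp q f‖ := by
  have hB : ∀ _ : ι, ‖ContinuousLinearMap.mul 𝕜 𝕜‖ ≤ (1 : NNReal) := fun _ =>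
    ContinuousLinearMap.opNorm_mul_le 𝕜 𝕜
  let toLpSpace {s : ℝ≥0∞} [Fact (1 ≤ s)] := (lpPiLpₗᵢ (fun _ : ι => 𝕜) 𝕜 (p := s)).symm
  have hmul : lp.holderL r (fun _ => ContinuousLinearMap.mul 𝕜 𝕜) hB
      (toLpSpace (WithLp.toLp p e)) (toLpSpace (WithLp.toLp q f)) =
        toLpSpace (WithLp.toLp r (e * f)) := rfl
  have hHolder := (lp.holderL r _ hB).le_of_opNorm₂_le_of_le (lp.norm_holderL_le r _ hB)
    (le_refl ‖toLpSpace (WithLp.toLp p e)‖) (le_refl ‖toLpSpace (WithLp.toLp q f)‖)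
  simpa [hmul, toLpSpace] using hHolder

theorem norm_sum_mul_le {p q : ℝ≥0∞} [Fact (1 ≤ p)] [Fact (1 ≤ q)] [p.HolderConjugate q]
    (e f : ι → 𝕜) :
    ‖∑ i, e i * f i‖ ≤ ‖WithLp.toLp p e‖ * ‖WithLp.toLp q f‖ :=
  calc ‖∑ i, e i * f i‖ ≤ ∑ i, ‖e i * f i‖ := norm_sum_le _ _
    _ = ‖WithLp.toLp 1 (e * f)‖ := (norm_eq_of_L1 (WithLp.toLp 1 (e * f))).symm
    _ ≤ _ := norm_toLp_mul_le e f

end PiLp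

namespace Matrix

variable {m n 𝕜 : Type*} [Fintype m] [Fintype n] [RCLike 𝕜]

theorem norm_toLp_top_mulVec_le {p q : ℝ≥0∞} [Fact (1 ≤ p)] [Fact (1 ≤ q)] [q.HolderConjugate p]
    (A : Matrix m n 𝕜) (y : n → 𝕜) :
    ‖WithLp.toLp ∞ (A *ᵥ y)‖ ≤ (⨆ i, ‖WithLp.toLp q (A i)‖) * ‖WithLp.toLp p y‖ := by
  have hrow : ∀ i, ‖WithLp.toLp q (A i)‖ ≤ ⨆ i, ‖WithLp.toLp q (A i)‖ := fun i =>
    le_ciSup (f := fun i => ‖WithLp.toLp q (A i)‖) (Set.finite_range _).bddAbove i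
  rw [PiLp.norm_toLp, pi_norm_le_iff_of_nonneg
    (mul_nonneg (Real.iSup_nonneg fun _ => norm_nonneg _) (norm_nonneg _))]
  intro i
  calc ‖(A *ᵥ y) i‖ ≤ ‖WithLp.toLp q (A i)‖ * ‖WithLp.toLp p y‖ := PiLp.norm_sum_mul_le (A i) y
    _ ≤ _ := by gcongr; exact hrow i

end Matrix

open Matrix

/-- Lemma 1, one direction: for conjugate exponents `p, q ∈ [1,∞]`,
`‖diag(x)·A·y‖_p ≤ (max_h ‖A_{h•}‖_q) ‖x‖_p ‖y‖_p`. -/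
theorem stmt_2 {n : ℕ} (p q : ℝ≥0∞) [Fact (1 ≤ p)] [Fact (1 ≤ q)]
    (hpq : 1 / p + 1 / q = 1)
    (A : Matrix (Fin n) (Fin n) ℂ) (x y : Fin n → ℂ) :
    ‖(WithLp.equiv p (Fin n → ℂ)).symm (fun h => x h * ∑ k, A h k * y k)‖ ≤
      (⨆ h, ‖(WithLp.equiv q (Fin n → ℂ)).symm (A h)‖) *
        ‖(WithLp.equiv p (Fin n → ℂ)).symm x‖ *
        ‖(WithLp.equiv p (Fin n → ℂ)).symm y‖ := by
  have : q.HolderConjugate p := ENNReal.holderConjugate_iff.mpr (by simpa [add_comm] using hpq)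
  simp only [WithLp.equiv_symm_apply]
  calc ‖WithLp.toLp p (x * (A *ᵥ y))‖ ≤ ‖WithLp.toLp p x‖ * ‖WithLp.toLp ∞ (A *ᵥ y)‖ :=
        PiLp.norm_toLp_mul_le x (A *ᵥ y)
    _ ≤ ‖WithLp.toLp p x‖ * ((⨆ h, ‖WithLp.toLp q (A h)‖) * ‖WithLp.toLp p y‖) := by
        gcongr; exact norm_toLp_top_mulVec_le A y
    _ = _ := by ring
end

section
/- For p, q ∈ [1,∞] with 1/p + 1/q = 1 and any complex n×n matrix A, the value max over unit vectors x, y (in p-norm) of ‖diag(x)·A·y‖_p equals max_h ‖A_{h•}‖_q; in particular there exist unit vectors x, y with ‖diag(x)·A·y‖_p = max_h ‖A_{h•}‖_q. -/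
open scoped ENNReal ComplexConjugate
open Finset WithLp

/-!
Hölder's inequality bounds every entry of `A y` by the `q`-norm of the corresponding row when
`‖y‖_p = 1`, and multiplying by `diag(x)` with `‖x‖_p = 1` cannot push the `p`-norm above the
largest entry. The bound is attained by taking `x` to be the unit vector at a row `h₀` of maximal
`q`-norm and `y` a unit vector realising equality in Hölder's inequality for that row, built from
`conj aᵢ / |aᵢ| · |aᵢ| ^ (q - 1)` (with the obvious modifications when `p` or `q` is infinite).
-/

namespace RCLike

variable {K : Type*} [RCLike K]

lemma mul_conj_div_norm (z : K) : z * (conj z / ‖z‖) = ‖z‖ := by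
  rcases eq_or_ne z 0 with rfl | hz
  · simp
  have hz' : (‖z‖ : K) ≠ 0 := ofReal_ne_zero.2 (norm_ne_zero_iff.2 hz)
  rw [mul_div_assoc', mul_conj, sq, mul_div_cancel_right₀ _ hz']

lemma norm_conj_div_norm {z : K} (hz : z ≠ 0) : ‖conj z / ‖z‖‖ = 1 := by
  rw [norm_div, norm_conj, norm_ofReal, abs_norm, div_self (norm_ne_zero_iff.2 hz)]

lemma norm_conj_div_norm_le_one (z : K) : ‖conj z / ‖z‖‖ ≤ 1 := by
  rcases eq_or_ne z 0 with rfl | hz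
  · simp
  · exact (norm_conj_div_norm hz).le

end RCLike

namespace PiLp

variable {ι : Type*} [Fintype ι] {p q : ℝ≥0∞}

lemma norm_mono (hp : p ≠ 0) {β γ : ι → Type*} [∀ i, SeminormedAddCommGroup (β i)]
    [∀ i, SeminormedAddCommGroup (γ i)] {x : PiLp p β} {y : PiLp p γ}
    (h : ∀ i, ‖x i‖ ≤ ‖y i‖) : ‖x‖ ≤ ‖y‖ := by
  obtain rfl | rfl | hp := p.trichotomy
  · exact absurd rfl hp
  · rw [norm_eq_ciSup, norm_eq_ciSup]
    exact ciSup_mono (Set.finite_range _).bddAbove h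
  · rw [norm_eq_sum hp, norm_eq_sum hp]
    gcongr with i
    exact h i

theorem norm_sum_mul_le_s5 {R : Type*} [SeminormedRing R] [p.HolderConjugate q] (u v : ι → R) :
    ‖∑ i, u i * v i‖ ≤ ‖toLp q u‖ * ‖toLp p v‖ := by
  refine (norm_sum_le _ _).trans <| (sum_le_sum fun i _ ↦ norm_mul_le _ _).trans ?_
  rcases eq_or_ne p ∞ with rfl | hp
  · obtain rfl : q = 1 := (ENNReal.HolderConjugate.eq_top_iff_eq_one ∞ q).1 rfl
    rw [norm_eq_of_L1, sum_mul]
    gcongr with i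
    exact norm_apply_le (toLp ∞ v) i
  rcases eq_or_ne q ∞ with rfl | hq
  · obtain rfl : p = 1 := (ENNReal.HolderConjugate.eq_top_iff_eq_one ∞ p).1 rfl
    rw [norm_eq_of_L1, mul_sum]
    gcongr with i
    exact norm_apply_le (toLp ∞ u) i
  · have hpq := ENNReal.HolderConjugate.toReal_of_ne_top hp hq
    rw [norm_eq_sum (ENNReal.toReal_pos (ENNReal.HolderConjugate.ne_zero q p) hq),
      norm_eq_sum (ENNReal.toReal_pos (ENNReal.HolderConjugate.ne_zero p q) hp)]
    exact Real.inner_le_Lp_mul_Lq_of_nonneg univ hpq.symm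
      (fun _ _ ↦ norm_nonneg _) (fun _ _ ↦ norm_nonneg _)

variable {𝕜 : Type*} [RCLike 𝕜]

theorem norm_toLp_mul_le_s5 [Fact (1 ≤ p)] (x s : ι → 𝕜) :
    ‖toLp p (fun i ↦ x i * s i)‖ ≤ ‖toLp ∞ s‖ * ‖toLp p x‖ := by
  have hs : ‖(‖toLp ∞ s‖ : 𝕜)‖ = ‖toLp ∞ s‖ := by rw [RCLike.norm_ofReal, abs_norm (toLp ∞ s)]
  calc ‖toLp p (fun i ↦ x i * s i)‖
      ≤ ‖(‖toLp ∞ s‖ : 𝕜) • toLp p x‖ := by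
        refine norm_mono (zero_lt_one.trans_le Fact.out).ne' fun i ↦ ?_
        rw [smul_apply, smul_eq_mul, norm_mul, norm_mul, hs, mul_comm]
        gcongr
        exact norm_apply_le (toLp ∞ s) i
    _ = ‖toLp ∞ s‖ * ‖toLp p x‖ := by rw [norm_smul, hs]

lemma exists_ne_zero_norm_toLp_top_mul_le (a : ι → 𝕜) (ha : a ≠ 0) :
    ∃ w : ι → 𝕜, w ≠ 0 ∧ ‖toLp ∞ a‖ * ‖toLp 1 w‖ ≤ ‖∑ i, a i * w i‖ := by
  classical
  obtain ⟨i, hi⟩ := Function.ne_iff.1 ha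
  have : Nonempty ι := ⟨i⟩
  obtain ⟨k, hk⟩ := Finite.exists_max fun i ↦ ‖a i‖
  have hak : a k ≠ 0 := norm_pos_iff.1 ((norm_pos_iff.2 hi).trans_le (hk i))
  have hnorm : ‖toLp ∞ a‖ = ‖a k‖ :=
    le_antisymm (by rw [norm_eq_ciSup]; exact ciSup_le hk) (norm_apply_le (toLp ∞ a) k)
  refine ⟨Pi.single k (conj (a k)), by simpa using hak, le_of_eq ?_⟩
  rw [hnorm, toLp_single, norm_single, RCLike.norm_conj,
    sum_eq_single_of_mem k (mem_univ k) fun j _ hj ↦ by simp [hj], Pi.single_eq_same,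
    RCLike.mul_conj, norm_pow, RCLike.norm_ofReal, abs_norm, sq]

lemma exists_ne_zero_norm_toLp_one_mul_le (a : ι → 𝕜) (ha : a ≠ 0) :
    ∃ w : ι → 𝕜, w ≠ 0 ∧ ‖toLp 1 a‖ * ‖toLp ∞ w‖ ≤ ‖∑ i, a i * w i‖ := by
  obtain ⟨k, hk⟩ := Function.ne_iff.1 ha
  have : Nonempty ι := ⟨k⟩
  refine ⟨fun i ↦ conj (a i) / ‖a i‖, Function.ne_iff.2 ⟨k, ?_⟩, ?_⟩
  · exact norm_ne_zero_iff.1 (by rw [RCLike.norm_conj_div_norm hk]; exact one_ne_zero)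
  simp_rw [RCLike.mul_conj_div_norm, ← RCLike.ofReal_sum, RCLike.norm_ofReal,
    abs_of_nonneg (sum_nonneg fun i _ ↦ norm_nonneg (a i))]
  rw [norm_eq_of_L1]
  refine mul_le_of_le_one_right (sum_nonneg fun i _ ↦ norm_nonneg _) ?_
  rw [norm_eq_ciSup]
  exact ciSup_le fun i ↦ RCLike.norm_conj_div_norm_le_one (a i)

lemma exists_ne_zero_norm_toLp_mul_le_of_ne_top [p.HolderConjugate q] (hp : p ≠ ∞) (hq : q ≠ ∞)
    (a : ι → 𝕜) (ha : a ≠ 0) : ∃ w : ι → 𝕜, w ≠ 0 ∧ ‖toLp q a‖ * ‖toLp p w‖ ≤ ‖∑ i, a i * w i‖ := by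
  obtain ⟨k, hk⟩ := Function.ne_iff.1 ha
  have hpq := ENNReal.HolderConjugate.toReal_of_ne_top hp hq
  set t := q.toReal
  set S := ∑ i, ‖a i‖ ^ t
  have hS : 0 < S := sum_pos' (fun i _ ↦ by positivity) ⟨k, mem_univ k, by positivity⟩
  set w : ι → 𝕜 := fun i ↦ conj (a i) / ‖a i‖ * (‖a i‖ ^ (t - 1) : ℝ)
  have hw : ∀ i, ‖w i‖ = ‖a i‖ ^ (t - 1) := by
    intro i
    rcases eq_or_ne (a i) 0 with h | h
    · simp [w, h, Real.zero_rpow hpq.symm.sub_one_ne_zero]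
    · rw [norm_mul, RCLike.norm_conj_div_norm h, one_mul, RCLike.norm_ofReal,
        abs_of_nonneg (by positivity)]
  have haw : ∀ i, a i * w i = (‖a i‖ ^ t : ℝ) := by
    intro i
    rw [← mul_assoc, RCLike.mul_conj_div_norm, ← RCLike.ofReal_mul,
      ← Real.rpow_one_add' (norm_nonneg _) (by linarith [hpq.symm.pos]), add_sub_cancel]
  refine ⟨w, Function.ne_iff.2 ⟨k, norm_ne_zero_iff.1 ?_⟩, le_of_eq ?_⟩
  · rw [hw]; positivity
  rw [norm_eq_sum hpq.symm.pos, norm_eq_sum hpq.pos]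
  simp only [hw, haw, ← Real.rpow_mul (norm_nonneg _), hpq.symm.sub_one_mul_conj]
  rw [← RCLike.ofReal_sum, RCLike.norm_ofReal, abs_of_pos hS, ← Real.rpow_add hS,
    add_comm, hpq.one_div_add_one_div, div_one, Real.rpow_one]

theorem exists_ne_zero_norm_toLp_mul_le [p.HolderConjugate q] (a : ι → 𝕜) (ha : a ≠ 0) :
    ∃ w : ι → 𝕜, w ≠ 0 ∧ ‖toLp q a‖ * ‖toLp p w‖ ≤ ‖∑ i, a i * w i‖ := by
  rcases eq_or_ne p ∞ with rfl | hp
  · obtain rfl : q = 1 := (ENNReal.HolderConjugate.eq_top_iff_eq_one ∞ q).1 rfl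
    exact exists_ne_zero_norm_toLp_one_mul_le a ha
  rcases eq_or_ne q ∞ with rfl | hq
  · obtain rfl : p = 1 := (ENNReal.HolderConjugate.eq_top_iff_eq_one ∞ p).1 rfl
    exact exists_ne_zero_norm_toLp_top_mul_le a ha
  · exact exists_ne_zero_norm_toLp_mul_le_of_ne_top hp hq a ha

theorem exists_norm_toLp_eq_one_norm_sum_mul_eq [Nonempty ι] [p.HolderConjugate q] (a : ι → 𝕜) :
    ∃ y : ι → 𝕜, ‖toLp p y‖ = 1 ∧ ‖∑ i, a i * y i‖ = ‖toLp q a‖ := by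
  classical
  have : Fact (1 ≤ p) := ⟨ENNReal.HolderConjugate.one_le p q⟩
  have : Fact (1 ≤ q) := ⟨ENNReal.HolderConjugate.one_le q p⟩
  rcases eq_or_ne a 0 with rfl | ha
  · refine ⟨Pi.single (Classical.arbitrary ι) 1, ?_, by simp⟩
    rw [toLp_single, norm_single, norm_one]
  obtain ⟨w, hw, hle⟩ := exists_ne_zero_norm_toLp_mul_le (p := p) (q := q) a ha
  have hw' : 0 < ‖toLp p w‖ := norm_pos_iff.2 (by simpa using hw)
  set c : 𝕜 := ((‖toLp p w‖⁻¹ : ℝ) : 𝕜)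
  have hc : ‖c‖ = ‖toLp p w‖⁻¹ := by rw [RCLike.norm_ofReal, abs_of_pos (inv_pos.2 hw')]
  have hy : ‖toLp p (c • w)‖ = 1 := by rw [toLp_smul, norm_smul, hc, inv_mul_cancel₀ hw'.ne']
  refine ⟨c • w, hy, le_antisymm ?_ ?_⟩
  · simpa only [hy, mul_one] using norm_sum_mul_le_s5 (p := p) (q := q) a (c • w)
  · simp only [Pi.smul_apply, smul_eq_mul, mul_left_comm (a _), ← mul_sum, norm_mul, hc]
    rw [inv_mul_eq_div, le_div_iff₀ hw']
    exact hle

end PiLp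

theorem stmt_5_general {n : ℕ} (hn : 0 < n) (p q : ℝ≥0∞) [Fact (1 ≤ p)]
    (hpq : 1 / p + 1 / q = 1) (A : Matrix (Fin n) (Fin n) ℂ) :
    IsGreatest
      {r : ℝ | ∃ x y : Fin n → ℂ,
        ‖(WithLp.equiv p (Fin n → ℂ)).symm x‖ = 1 ∧
        ‖(WithLp.equiv p (Fin n → ℂ)).symm y‖ = 1 ∧
        r = ‖(WithLp.equiv p (Fin n → ℂ)).symm (fun h => x h * ∑ k, A h k * y k)‖}
      (⨆ h, ‖(WithLp.equiv q (Fin n → ℂ)).symm (A h)‖) := by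
  have : Nonempty (Fin n) := Fin.pos_iff_nonempty.mp hn
  have : p.HolderConjugate q := ENNReal.holderConjugate_iff.2 (by simpa only [one_div] using hpq)
  simp only [WithLp.equiv_symm_apply]
  obtain ⟨h₀, hh₀⟩ := exists_eq_ciSup_of_finite (f := fun h ↦ ‖toLp q (A h)‖)
  constructor
  · obtain ⟨y, hy, hAy⟩ := PiLp.exists_norm_toLp_eq_one_norm_sum_mul_eq (p := p) (q := q) (A h₀)
    refine ⟨Pi.single h₀ 1, y, by rw [PiLp.toLp_single, PiLp.norm_single, norm_one], hy, ?_⟩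
    rw [← hh₀, ← hAy, ← PiLp.norm_single p (fun _ ↦ ℂ) h₀, ← PiLp.toLp_single, ← one_mul (∑ k, _),
      Pi.single_mul_left (f := fun h ↦ ∑ k, A h k * y k)]
    rfl
  · rintro _ ⟨x, y, hx, hy, rfl⟩
    refine (PiLp.norm_toLp_mul_le_s5 x _).trans ?_
    rw [hx, mul_one, PiLp.norm_eq_ciSup]
    refine ciSup_mono (Set.finite_range _).bddAbove fun h ↦ ?_
    simpa only [hy, mul_one] using PiLp.norm_sum_mul_le_s5 (p := p) (q := q) (A h) y

/-- Lemma 1 (full statement): for conjugate exponents `p, q ∈ [1,∞]`, the maximum of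
`‖diag(x)·A·y‖_p` over unit vectors `x, y` is exactly `max_h ‖A_{h•}‖_q`, and it is attained. -/
theorem stmt_5 {n : ℕ} (hn : 0 < n) (p q : ℝ≥0∞) [Fact (1 ≤ p)] [Fact (1 ≤ q)]
    (hpq : 1 / p + 1 / q = 1) (A : Matrix (Fin n) (Fin n) ℂ) :
    IsGreatest
      {r : ℝ | ∃ x y : Fin n → ℂ,
        ‖(WithLp.equiv p (Fin n → ℂ)).symm x‖ = 1 ∧
        ‖(WithLp.equiv p (Fin n → ℂ)).symm y‖ = 1 ∧
        r = ‖(WithLp.equiv p (Fin n → ℂ)).symm (fun h => x h * ∑ k, A h k * y k)‖}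
      (⨆ h, ‖(WithLp.equiv q (Fin n → ℂ)).symm (A h)‖) :=
  stmt_5_general hn p q hpq A
end

section
/- Let G(f) := −(1/V₀²)·diag(f+s)·Z·(conj(f)+conj(s)) with V₀ > 0, Z ∈ ℂ^{n×n}, s ∈ ℂⁿ, and suppose V₀² > 4‖Z‖*‖s‖ where ‖Z‖* := max_h ‖Z_{h•}‖₂ and ‖·‖ is the Euclidean norm. Set δ := 4‖Z‖*‖s‖²/V₀². Then G maps the closed ball B = {f : ‖f‖ ≤ δ} into itself. -/
open scoped ComplexConjugate

/-!
With `u = f + s` we have `G f = -V₀⁻² diag(u) Z ū`, and Cauchy–Schwarz on each row gives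
`‖G f‖ ≤ ‖Z‖* ‖u‖² / V₀²`. The hypothesis `V₀² > 4‖Z‖*‖s‖` gives `δ ≤ ‖s‖`,
so `‖u‖ ≤ 2‖s‖` and `‖G f‖ ≤ 4‖Z‖*‖s‖² / V₀² = δ`.
-/

section EuclideanBounds

variable {ι : Type*} [Fintype ι]

theorem EuclideanSpace.norm_toLp_mul_le {𝕜 : Type*} [RCLike 𝕜] (x : EuclideanSpace 𝕜 ι)
    {w : ι → 𝕜} {M : ℝ} (hM : 0 ≤ M) (hw : ∀ i, ‖w i‖ ≤ M) :
    ‖WithLp.toLp 2 (fun i => x i * w i)‖ ≤ M * ‖x‖ := by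
  rw [← pow_le_pow_iff_left₀ (norm_nonneg _) (by positivity) two_ne_zero, mul_pow,
    EuclideanSpace.norm_sq_eq, EuclideanSpace.norm_sq_eq, Finset.mul_sum]
  gcongr with i
  rw [PiLp.toLp_apply, norm_mul, mul_pow, mul_comm]
  gcongr
  exact hw i

theorem norm_sum_mul_conj_le (a : ι → ℂ) (y : EuclideanSpace ℂ ι) :
    ‖∑ k, a k * conj (y k)‖ ≤ ‖WithLp.toLp 2 a‖ * ‖y‖ := by
  have h : ∑ k, a k * conj (y k) = inner ℂ y (WithLp.toLp 2 a) := by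
    simp only [PiLp.inner_apply, RCLike.inner_apply]
  rw [h, mul_comm]
  exact norm_inner_le_norm _ _

theorem norm_diag_mul_mulVec_conj_le (Z : Matrix ι ι ℂ) {C : ℝ} (hC0 : 0 ≤ C)
    (hC : ∀ h, ‖WithLp.toLp 2 (Z h)‖ ≤ C) (x y : EuclideanSpace ℂ ι) :
    ‖WithLp.toLp 2 (fun h => x h * ∑ k, Z h k * conj (y k))‖ ≤ C * ‖y‖ * ‖x‖ := by
  refine EuclideanSpace.norm_toLp_mul_le x (by positivity) fun h => ?_
  exact (norm_sum_mul_conj_le (Z h) y).trans (by gcongr; exact hC h)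

end EuclideanBounds

theorem stmt_8_general {n : ℕ} (V₀ : ℝ)
    (Z : Matrix (Fin n) (Fin n) ℂ) (s : EuclideanSpace ℂ (Fin n))
    (Zn : ℝ) (hZn : Zn = ⨆ h, ‖(WithLp.equiv 2 (Fin n → ℂ)).symm (Z h)‖)
    (hcond : V₀ ^ 2 > 4 * Zn * ‖s‖)
    (δ : ℝ) (hδ : δ = 4 * Zn * ‖s‖ ^ 2 / V₀ ^ 2)
    (f : EuclideanSpace ℂ (Fin n)) (hf : ‖f‖ ≤ δ) :
    ‖(WithLp.equiv 2 (Fin n → ℂ)).symm (fun h =>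
        -((V₀ : ℂ) ^ 2)⁻¹ * ((f h + s h) * ∑ k, Z h k * (conj (f k) + conj (s k))))‖ ≤ δ := by
  have hrow : ∀ h, ‖WithLp.toLp 2 (Z h)‖ ≤ Zn := fun h =>
    hZn ▸ le_ciSup (f := fun h => ‖WithLp.toLp 2 (Z h)‖) (Set.finite_range _).bddAbove h
  have hZn0 : 0 ≤ Zn := hZn ▸ Real.iSup_nonneg fun h => norm_nonneg _
  have hV2 : 0 < V₀ ^ 2 := lt_of_le_of_lt (by positivity) hcond
  have hδs : δ ≤ ‖s‖ := by
    rw [hδ, div_le_iff₀ hV2]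
    nlinarith [norm_nonneg s]
  have hfs : ‖f + s‖ ≤ 2 * ‖s‖ := (norm_add_le f s).trans (by linarith)
  have hG : (WithLp.equiv 2 (Fin n → ℂ)).symm (fun h =>
        -((V₀ : ℂ) ^ 2)⁻¹ * ((f h + s h) * ∑ k, Z h k * (conj (f k) + conj (s k)))) =
      (-((V₀ : ℂ) ^ 2)⁻¹) • WithLp.toLp 2 (fun h => (f + s) h * ∑ k, Z h k * conj ((f + s) k)) := by
    ext h
    simp
  calc _ = (V₀ ^ 2)⁻¹ * ‖WithLp.toLp 2 (fun h => (f + s) h * ∑ k, Z h k * conj ((f + s) k))‖ := by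
        rw [hG, norm_smul, norm_neg, norm_inv, ← Complex.ofReal_pow, Complex.norm_of_nonneg hV2.le]
    _ ≤ (V₀ ^ 2)⁻¹ * (Zn * ‖f + s‖ * ‖f + s‖) := by
        gcongr; exact norm_diag_mul_mulVec_conj_le Z hZn0 hrow _ _
    _ ≤ (V₀ ^ 2)⁻¹ * (Zn * (2 * ‖s‖) * (2 * ‖s‖)) := by gcongr
    _ = δ := by rw [hδ]; ring

/-- Invariance of the ball: if `V₀² > 4‖Z‖*‖s‖` then
`G(f) = −(1/V₀²) diag(f+s) Z (f̄+s̄)` maps the closed ball of radius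
`δ = 4‖Z‖*‖s‖²/V₀²` into itself (Euclidean norm, `‖Z‖*` = max Euclidean row norm). -/
theorem stmt_8 {n : ℕ} (V₀ : ℝ) (hV : 0 < V₀)
    (Z : Matrix (Fin n) (Fin n) ℂ) (s : EuclideanSpace ℂ (Fin n))
    (Zn : ℝ) (hZn : Zn = ⨆ h, ‖(WithLp.equiv 2 (Fin n → ℂ)).symm (Z h)‖)
    (hcond : V₀ ^ 2 > 4 * Zn * ‖s‖)
    (δ : ℝ) (hδ : δ = 4 * Zn * ‖s‖ ^ 2 / V₀ ^ 2)
    (f : EuclideanSpace ℂ (Fin n)) (hf : ‖f‖ ≤ δ) :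
    ‖(WithLp.equiv 2 (Fin n → ℂ)).symm (fun h =>
        -((V₀ : ℂ) ^ 2)⁻¹ * ((f h + s h) * ∑ k, Z h k * (conj (f k) + conj (s k))))‖ ≤ δ :=
  stmt_8_general V₀ Z s Zn hZn hcond δ hδ f hf
end

section
/- Let G(f) := −(1/V₀²)·diag(f+s)·Z·(conj(f)+conj(s)) with V₀ > 0 and V₀² > 4‖Z‖*‖s‖, where ‖Z‖* = max_h ‖Z_{h•}‖₂. Set δ := 4‖Z‖*‖s‖²/V₀². Then G is a contraction on the ball {f : ‖f‖ ≤ δ} with Lipschitz constant k = (2‖Z‖*/V₀²)(δ + ‖s‖) < 1. -/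
/-!
Write `G f = -V₀⁻² • Q (f + s)` with `Q a = diag(a) Z ā`. The difference of the quadratic map
splits as `Q a - Q b = diag(a - b) Z ā + diag(b) Z (ā - b̄)`, and Cauchy–Schwarz row by row gives
`‖diag(x) Z y‖ ≤ ‖Z‖* ‖x‖ ‖y‖`. On the ball, `‖f + s‖ ≤ δ + ‖s‖`, which yields the constant `k`;
with `x = ‖Z‖* ‖s‖ / V₀² < 1/4` one has `k = 8x² + 2x < 1`.
-/

open scoped ComplexConjugate
open Matrix WithLp

section
variable {𝕜 : Type*} [RCLike 𝕜] {ι κ : Type*}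

noncomputable def maxRowNorm [Fintype κ] (Z : Matrix ι κ 𝕜) : ℝ := ⨆ i, ‖toLp 2 (Z i)‖

def diagMulVec [Fintype κ] (Z : Matrix ι κ 𝕜) (x : EuclideanSpace 𝕜 ι) (y : EuclideanSpace 𝕜 κ) :
    EuclideanSpace 𝕜 ι :=
  toLp 2 (x.ofLp * Z *ᵥ y.ofLp)

def conjVec (x : EuclideanSpace 𝕜 ι) : EuclideanSpace 𝕜 ι := toLp 2 (star x.ofLp)

lemma maxRowNorm_nonneg [Fintype κ] (Z : Matrix ι κ 𝕜) : 0 ≤ maxRowNorm Z :=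
  Real.iSup_nonneg fun _ => norm_nonneg _

lemma norm_row_le_maxRowNorm [Finite ι] [Fintype κ] (Z : Matrix ι κ 𝕜) (i : ι) :
    ‖toLp 2 (Z i)‖ ≤ maxRowNorm Z :=
  le_ciSup (f := fun i => ‖toLp 2 (Z i)‖) (Set.finite_range _).bddAbove i

@[simp]
lemma norm_conjVec [Fintype ι] (x : EuclideanSpace 𝕜 ι) : ‖conjVec x‖ = ‖x‖ := by
  simp [conjVec, EuclideanSpace.norm_eq]

lemma conjVec_sub (x y : EuclideanSpace 𝕜 ι) : conjVec (x - y) = conjVec x - conjVec y := by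
  ext i; simp [conjVec]

lemma norm_mulVec_apply_le [Fintype κ] (Z : Matrix ι κ 𝕜) (y : EuclideanSpace 𝕜 κ) (i : ι) :
    ‖(Z *ᵥ y.ofLp) i‖ ≤ ‖toLp 2 (Z i)‖ * ‖y‖ := by
  have hinner : (Z *ᵥ y.ofLp) i = inner 𝕜 (toLp 2 (star (Z i))) y := by
    rw [EuclideanSpace.inner_eq_star_dotProduct, star_star, dotProduct_comm]; rfl
  rw [hinner, ← norm_conjVec (toLp 2 (Z i))]
  exact norm_inner_le_norm _ _

lemma norm_toLp_mul_le [Fintype ι] (x : EuclideanSpace 𝕜 ι) (w : ι → 𝕜) {C : ℝ} (hC : 0 ≤ C)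
    (hw : ∀ i, ‖w i‖ ≤ C) : ‖toLp 2 (x.ofLp * w)‖ ≤ C * ‖x‖ := by
  have hsq : ∑ i, ‖x i * w i‖ ^ 2 ≤ C ^ 2 * ∑ i, ‖x i‖ ^ 2 := by
    rw [Finset.mul_sum]
    gcongr with i
    rw [norm_mul, mul_pow, mul_comm]
    gcongr
    exact hw i
  rw [EuclideanSpace.norm_eq, EuclideanSpace.norm_eq, ← Real.sqrt_sq hC, ← Real.sqrt_mul (sq_nonneg C)]
  exact Real.sqrt_le_sqrt hsq

lemma norm_diagMulVec_le [Fintype ι] [Fintype κ] (Z : Matrix ι κ 𝕜) (x : EuclideanSpace 𝕜 ι)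
    (y : EuclideanSpace 𝕜 κ) : ‖diagMulVec Z x y‖ ≤ maxRowNorm Z * ‖x‖ * ‖y‖ := by
  rw [mul_right_comm]
  refine norm_toLp_mul_le x _ (by positivity [maxRowNorm_nonneg Z]) fun i => ?_
  exact (norm_mulVec_apply_le Z y i).trans (by gcongr; exact norm_row_le_maxRowNorm Z i)

lemma diagMulVec_self_sub [Fintype ι] (Z : Matrix ι ι 𝕜) (a b : EuclideanSpace 𝕜 ι) :
    diagMulVec Z a (conjVec a) - diagMulVec Z b (conjVec b) =
      diagMulVec Z (a - b) (conjVec a) + diagMulVec Z b (conjVec (a - b)) := by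
  ext i
  simp only [diagMulVec, conjVec, PiLp.sub_apply, Pi.mul_apply, ofLp_sub, star_sub, toLp_sub,
    mulVec_sub, PiLp.add_apply, Pi.sub_apply]
  ring

lemma norm_diagMulVec_self_sub_le [Fintype ι] (Z : Matrix ι ι 𝕜) (a b : EuclideanSpace 𝕜 ι) :
    ‖diagMulVec Z a (conjVec a) - diagMulVec Z b (conjVec b)‖ ≤
      maxRowNorm Z * (‖a‖ + ‖b‖) * ‖a - b‖ := by
  rw [diagMulVec_self_sub]
  calc _ ≤ ‖diagMulVec Z (a - b) (conjVec a)‖ + ‖diagMulVec Z b (conjVec (a - b))‖ :=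
        norm_add_le _ _
    _ ≤ maxRowNorm Z * ‖a - b‖ * ‖a‖ + maxRowNorm Z * ‖b‖ * ‖a - b‖ := by
        gcongr <;> grw [norm_diagMulVec_le, norm_conjVec]
    _ = maxRowNorm Z * (‖a‖ + ‖b‖) * ‖a - b‖ := by ring

end

/-- Contraction property: under `V₀² > 4‖Z‖*‖s‖`, the map
`G(f) = −(1/V₀²) diag(f+s) Z (f̄+s̄)` is a contraction on the ball of radius
`δ = 4‖Z‖*‖s‖²/V₀²` with Lipschitz constant `k = (2‖Z‖*/V₀²)(δ + ‖s‖) < 1`. -/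
theorem stmt_9 {n : ℕ} (V₀ : ℝ) (hV : 0 < V₀)
    (Z : Matrix (Fin n) (Fin n) ℂ) (s : EuclideanSpace ℂ (Fin n))
    (Zn : ℝ) (hZn : Zn = ⨆ h, ‖(WithLp.equiv 2 (Fin n → ℂ)).symm (Z h)‖)
    (hcond : V₀ ^ 2 > 4 * Zn * ‖s‖)
    (δ : ℝ) (hδ : δ = 4 * Zn * ‖s‖ ^ 2 / V₀ ^ 2)
    (k : ℝ) (hk : k = 2 * Zn / V₀ ^ 2 * (δ + ‖s‖))
    (G : EuclideanSpace ℂ (Fin n) → EuclideanSpace ℂ (Fin n))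
    (hG : ∀ f, G f = (WithLp.equiv 2 (Fin n → ℂ)).symm (fun h =>
        -((V₀ : ℂ) ^ 2)⁻¹ * ((f h + s h) * ∑ j, Z h j * (conj (f j) + conj (s j))))) :
    k < 1 ∧ ∀ f' f'' : EuclideanSpace ℂ (Fin n), ‖f'‖ ≤ δ → ‖f''‖ ≤ δ →
      ‖G f' - G f''‖ ≤ k * ‖f' - f''‖ := by
  have hV2 : 0 < V₀ ^ 2 := by positivity
  replace hZn : Zn = maxRowNorm Z := hZn
  have hZn0 : 0 ≤ Zn := hZn ▸ maxRowNorm_nonneg Z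
  have hG' : ∀ f, G f = (-((V₀ : ℂ) ^ 2)⁻¹) • diagMulVec Z (f + s) (conjVec (f + s)) := by
    intro f
    ext h
    simp [hG, diagMulVec, conjVec, mulVec, dotProduct]
  refine ⟨?_, fun f' f'' hf' hf'' => ?_⟩
  · have hx : Zn * ‖s‖ / V₀ ^ 2 < 1 / 4 := by rw [div_lt_iff₀ hV2]; linarith
    have hx0 : 0 ≤ Zn * ‖s‖ / V₀ ^ 2 := by positivity
    have hkx : k = 8 * (Zn * ‖s‖ / V₀ ^ 2) ^ 2 + 2 * (Zn * ‖s‖ / V₀ ^ 2) := by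
      rw [hk, hδ]; field_simp; ring
    nlinarith
  have hball : ∀ f : EuclideanSpace ℂ (Fin n), ‖f‖ ≤ δ → ‖f + s‖ ≤ δ + ‖s‖ :=
    fun f hf => (norm_add_le f s).trans (by gcongr)
  calc ‖G f' - G f''‖
      = (V₀ ^ 2)⁻¹ * ‖diagMulVec Z (f' + s) (conjVec (f' + s)) -
          diagMulVec Z (f'' + s) (conjVec (f'' + s))‖ := by
        rw [hG', hG', ← smul_sub, norm_smul]; simp
    _ ≤ (V₀ ^ 2)⁻¹ * (Zn * (‖f' + s‖ + ‖f'' + s‖) * ‖f' - f''‖) := by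
        grw [norm_diagMulVec_self_sub_le, add_sub_add_right_eq_sub, hZn]
    _ ≤ (V₀ ^ 2)⁻¹ * (Zn * ((δ + ‖s‖) + (δ + ‖s‖)) * ‖f' - f''‖) := by
        grw [hball f' hf', hball f'' hf'']
    _ = k * ‖f' - f''‖ := by rw [hk]; ring
end

section
/- Under the hypotheses V₀ > 0 and V₀² > 4‖Z‖*‖s‖₂ (with ‖Z‖* = max_h ‖Z_{h•}‖₂), the unique fixed point f of G(f) = −(1/V₀²)diag(f+s)Z(f̄+s̄) in the ball of radius δ = 4‖Z‖*‖s‖₂²/V₀² gives a vector λ := V₀²·conj(f) with ‖λ‖₂ ≤ 4‖Z‖*‖s‖₂², such that v := V₀e^{jθ₀}(𝟙 + (1/V₀²)Z·s̄ + (1/V₀⁴)Z·λ) satisfies the power flow equations diag(conj(i))v = s with i = (e^{jθ₀}/V₀)(conj(f)+conj(s)) and v = V₀e^{jθ₀}𝟙 + Z·i. -/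
/-!
With `K = 4‖Z‖*‖s‖ / V₀² < 1`, the map `G` sends the closed ball of radius `δ = K‖s‖ ≤ ‖s‖`
into itself and is `K`-Lipschitz there: `‖diag(x) Z w̄‖ ≤ ‖Z‖* ‖w‖ ‖x‖` by Cauchy–Schwarz on the
rows, and `G x - G y` splits sesquilinearly into two such terms with `‖x + s‖, ‖y + s‖ ≤ 2‖s‖`.
Banach's fixed-point theorem gives `f`; the power flow equations are then algebraic identities,
the only input being `conj e * e = 1` for `e = exp (θ₀ j)`.
-/

open scoped ComplexConjugate

open Set Metric WithLp

namespace EuclideanSpace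

variable {𝕜 ι : Type*} [RCLike 𝕜] [Fintype ι]

theorem norm_le_mul_of_forall_norm_apply_le {x y : EuclideanSpace 𝕜 ι} {C : ℝ} (hC : 0 ≤ C)
    (h : ∀ k, ‖y k‖ ≤ C * ‖x k‖) : ‖y‖ ≤ C * ‖x‖ := by
  rw [norm_eq, norm_eq, ← Real.sqrt_sq hC, ← Real.sqrt_mul (sq_nonneg C), Finset.mul_sum]
  gcongr with k
  rw [← mul_pow]
  exact pow_le_pow_left₀ (norm_nonneg _) (h k) 2

theorem norm_sum_mul_conj_le (a : ι → 𝕜) (x : EuclideanSpace 𝕜 ι) :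
    ‖∑ k, a k * conj (x k)‖ ≤ ‖toLp 2 a‖ * ‖x‖ := by
  calc ‖∑ k, a k * conj (x k)‖ = ‖inner 𝕜 x (toLp 2 a)‖ := by
        simp [PiLp.inner_apply]
    _ ≤ ‖x‖ * ‖toLp 2 a‖ := norm_inner_le_norm _ _
    _ = ‖toLp 2 a‖ * ‖x‖ := mul_comm _ _

end EuclideanSpace

namespace PowerFlow

section RCLike

variable {𝕜 ι : Type*} [RCLike 𝕜] [Fintype ι] (Z : Matrix ι ι 𝕜)

noncomputable def maxRowNorm : ℝ := ⨆ h, ‖toLp 2 (Z h)‖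

theorem maxRowNorm_nonneg : 0 ≤ maxRowNorm Z :=
  Real.iSup_nonneg fun _ => norm_nonneg _

theorem norm_row_le_maxRowNorm (h : ι) : ‖toLp 2 (Z h)‖ ≤ maxRowNorm Z :=
  le_ciSup (f := fun h => ‖toLp 2 (Z h)‖) (finite_range _).bddAbove h

/-- `diag(x) Z w̄`. -/
noncomputable def diagMulConj (x w : EuclideanSpace 𝕜 ι) : EuclideanSpace 𝕜 ι :=
  toLp 2 fun h => x h * ∑ k, Z h k * conj (w k)

variable {Z}

theorem norm_diagMulConj_le (x w : EuclideanSpace 𝕜 ι) :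
    ‖diagMulConj Z x w‖ ≤ maxRowNorm Z * ‖w‖ * ‖x‖ := by
  refine EuclideanSpace.norm_le_mul_of_forall_norm_apply_le
    (mul_nonneg (maxRowNorm_nonneg Z) (norm_nonneg w)) fun h => ?_
  calc ‖x h * ∑ k, Z h k * conj (w k)‖ = ‖∑ k, Z h k * conj (w k)‖ * ‖x h‖ := by
        rw [norm_mul, mul_comm]
    _ ≤ maxRowNorm Z * ‖w‖ * ‖x h‖ := by
        gcongr
        exact (EuclideanSpace.norm_sum_mul_conj_le _ w).trans
          (mul_le_mul_of_nonneg_right (norm_row_le_maxRowNorm Z h) (norm_nonneg w))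

theorem diagMulConj_self_sub_self (x y : EuclideanSpace 𝕜 ι) :
    diagMulConj Z x x - diagMulConj Z y y = diagMulConj Z (x - y) x + diagMulConj Z y (x - y) := by
  ext h
  simp only [diagMulConj, PiLp.sub_apply, PiLp.add_apply, map_sub, mul_sub,
    Finset.sum_sub_distrib]
  ring

theorem norm_diagMulConj_self_sub_self_le (x y : EuclideanSpace 𝕜 ι) :
    ‖diagMulConj Z x x - diagMulConj Z y y‖ ≤ maxRowNorm Z * (‖x‖ + ‖y‖) * ‖x - y‖ := by
  rw [diagMulConj_self_sub_self]
  calc _ ≤ maxRowNorm Z * ‖x‖ * ‖x - y‖ + maxRowNorm Z * ‖x - y‖ * ‖y‖ :=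
        (norm_add_le _ _).trans (add_le_add (norm_diagMulConj_le _ _) (norm_diagMulConj_le _ _))
    _ = maxRowNorm Z * (‖x‖ + ‖y‖) * ‖x - y‖ := by ring

variable (Z)

/-- The paper's `G(f) = -V₀⁻² diag(f + s) Z (f̄ + s̄)`. -/
noncomputable def fixedPointMap (V₀ : ℝ) (s x : EuclideanSpace 𝕜 ι) : EuclideanSpace 𝕜 ι :=
  -((V₀ : 𝕜) ^ 2)⁻¹ • diagMulConj Z (x + s) (x + s)

variable {Z} {V₀ : ℝ} {s : EuclideanSpace 𝕜 ι}

theorem fixedPointMap_apply (x : EuclideanSpace 𝕜 ι) (h : ι) :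
    fixedPointMap Z V₀ s x h =
      -((V₀ : 𝕜) ^ 2)⁻¹ * ((x h + s h) * ∑ k, Z h k * (conj (x k) + conj (s k))) := by
  simp [fixedPointMap, diagMulConj]

theorem norm_fixedPointMap_le (x : EuclideanSpace 𝕜 ι) :
    ‖fixedPointMap Z V₀ s x‖ ≤ maxRowNorm Z * ‖x + s‖ ^ 2 / V₀ ^ 2 := by
  rw [fixedPointMap, norm_smul, norm_neg, norm_inv, norm_pow, RCLike.norm_ofReal, sq_abs,
    inv_mul_eq_div]
  gcongr
  exact (norm_diagMulConj_le _ _).trans_eq (by ring)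

theorem norm_fixedPointMap_sub_le (x y : EuclideanSpace 𝕜 ι) :
    ‖fixedPointMap Z V₀ s x - fixedPointMap Z V₀ s y‖ ≤
      maxRowNorm Z * (‖x + s‖ + ‖y + s‖) / V₀ ^ 2 * ‖x - y‖ := by
  rw [fixedPointMap, fixedPointMap, ← smul_sub, norm_smul, norm_neg, norm_inv, norm_pow,
    RCLike.norm_ofReal, sq_abs, div_mul_eq_mul_div, inv_mul_eq_div]
  gcongr
  simpa only [add_sub_add_right_eq_sub] using norm_diagMulConj_self_sub_self_le (x + s) (y + s)

theorem sq_pos_of_mul_norm_lt (hcond : 4 * maxRowNorm Z * ‖s‖ < V₀ ^ 2) : 0 < V₀ ^ 2 :=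
  lt_of_le_of_lt (by have := maxRowNorm_nonneg Z; positivity) hcond

theorem exists_fixedPoint_mem_closedBall (hcond : 4 * maxRowNorm Z * ‖s‖ < V₀ ^ 2) :
    ∃ f, ‖f‖ ≤ 4 * maxRowNorm Z * ‖s‖ ^ 2 / V₀ ^ 2 ∧ fixedPointMap Z V₀ s f = f := by
  set K := 4 * maxRowNorm Z * ‖s‖ / V₀ ^ 2
  have hZ := maxRowNorm_nonneg Z
  have hV := sq_pos_of_mul_norm_lt hcond
  have hK0 : 0 ≤ K := by positivity
  have hK1 : K < 1 := (div_lt_one hV).2 hcond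
  have hδ : 4 * maxRowNorm Z * ‖s‖ ^ 2 / V₀ ^ 2 = K * ‖s‖ := by ring
  -- `K < 1`, so the ball lies inside the ball of radius `‖s‖`
  have hball : ∀ x ∈ closedBall (0 : EuclideanSpace 𝕜 ι) (K * ‖s‖), ‖x + s‖ ≤ 2 * ‖s‖ := by
    intro x hx
    rw [mem_closedBall_zero_iff] at hx
    nlinarith [norm_add_le x s, norm_nonneg s]
  have hmaps :
      MapsTo (fixedPointMap Z V₀ s) (closedBall 0 (K * ‖s‖)) (closedBall 0 (K * ‖s‖)) := by
    intro x hx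
    rw [mem_closedBall_zero_iff, ← hδ]
    calc _ ≤ maxRowNorm Z * (2 * ‖s‖) ^ 2 / V₀ ^ 2 := by
          grw [norm_fixedPointMap_le x, hball x hx]
      _ = 4 * maxRowNorm Z * ‖s‖ ^ 2 / V₀ ^ 2 := by ring
  have hlip : LipschitzOnWith K.toNNReal (fixedPointMap Z V₀ s) (closedBall 0 (K * ‖s‖)) := by
    refine LipschitzOnWith.of_dist_le' fun x hx y hy => ?_
    rw [dist_eq_norm, dist_eq_norm]
    calc _ ≤ maxRowNorm Z * (2 * ‖s‖ + 2 * ‖s‖) / V₀ ^ 2 * ‖x - y‖ := by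
          grw [norm_fixedPointMap_sub_le x y, hball x hx, hball y hy]
      _ = K * ‖x - y‖ := by ring
  obtain ⟨f, hf, hfix, -⟩ := ContractingWith.exists_fixedPoint' isClosed_closedBall.isComplete
    hmaps ⟨by simpa using hK1, hlip.mapsToRestrict hmaps⟩
    (mem_closedBall_self (by positivity)) (edist_ne_top _ _)
  exact ⟨f, hδ ▸ mem_closedBall_zero_iff.1 hf, hfix⟩

end RCLike

section Complex

variable {ι : Type*} [Fintype ι] {Z : Matrix ι ι ℂ} {V₀ : ℝ} {e : ℂ} {f s i lam : ι → ℂ}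

theorem sum_mul_current (hi : ∀ k, i k = e / V₀ * (conj (f k) + conj (s k))) (h : ι) :
    ∑ k, Z h k * i k = e / V₀ * ∑ k, Z h k * (conj (f k) + conj (s k)) := by
  rw [Finset.mul_sum]
  exact Finset.sum_congr rfl fun k _ => by rw [hi]; ring

theorem voltage_eq (hi : ∀ k, i k = e / V₀ * (conj (f k) + conj (s k)))
    (hlam : ∀ k, lam k = (V₀ : ℂ) ^ 2 * conj (f k)) (h : ι) :
    (V₀ : ℂ) * e + ∑ k, Z h k * i k = V₀ * e *
      (1 + ((V₀ : ℂ) ^ 2)⁻¹ * (∑ k, Z h k * conj (s k)) +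
        ((V₀ : ℂ) ^ 4)⁻¹ * (∑ k, Z h k * lam k)) := by
  simp only [sum_mul_current hi, hlam, mul_add, Finset.sum_add_distrib,
    mul_left_comm _ ((V₀ : ℂ) ^ 2), ← Finset.mul_sum]
  field_simp
  ring

theorem conj_current_mul_voltage (hV : V₀ ≠ 0) (he : ‖e‖ = 1)
    (hi : ∀ k, i k = e / V₀ * (conj (f k) + conj (s k))) {h : ι}
    (hf : f h = -((V₀ : ℂ) ^ 2)⁻¹ * ((f h + s h) * ∑ k, Z h k * (conj (f k) + conj (s k)))) :
    conj (i h) * ((V₀ : ℂ) * e + ∑ k, Z h k * i k) = s h := by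
  have hV' : (V₀ : ℂ) ≠ 0 := mod_cast hV
  have hee : conj e * e = 1 := by rw [Complex.conj_mul', he]; norm_num
  rw [sum_mul_current hi, hi]
  simp only [map_mul, map_div₀, map_add, Complex.conj_conj, Complex.conj_ofReal]
  calc conj e / V₀ * (f h + s h) * (V₀ * e + e / V₀ * ∑ k, Z h k * (conj (f k) + conj (s k)))
      = conj e * e * (f h + s h + ((V₀ : ℂ) ^ 2)⁻¹ *
          ((f h + s h) * ∑ k, Z h k * (conj (f k) + conj (s k)))) := by
        field_simp
    _ = s h := by linear_combination (f h + s h + ((V₀ : ℂ) ^ 2)⁻¹ *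
          ((f h + s h) * ∑ k, Z h k * (conj (f k) + conj (s k)))) * hee + hf

end Complex

end PowerFlow

theorem stmt_11_general {n : ℕ} (V₀ θ₀ : ℝ)
    (Z : Matrix (Fin n) (Fin n) ℂ) (s : EuclideanSpace ℂ (Fin n))
    (Zn : ℝ) (hZn : Zn = ⨆ h, ‖(WithLp.equiv 2 (Fin n → ℂ)).symm (Z h)‖)
    (hcond : V₀ ^ 2 > 4 * Zn * ‖s‖) :
    ∃ f lam : EuclideanSpace ℂ (Fin n), ∃ i v : Fin n → ℂ,
      ‖f‖ ≤ 4 * Zn * ‖s‖ ^ 2 / V₀ ^ 2 ∧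
      (∀ h, f h = -((V₀ : ℂ) ^ 2)⁻¹ *
          ((f h + s h) * ∑ k, Z h k * (conj (f k) + conj (s k)))) ∧
      (∀ h, lam h = (V₀ : ℂ) ^ 2 * conj (f h)) ∧
      ‖lam‖ ≤ 4 * Zn * ‖s‖ ^ 2 ∧
      (∀ h, i h = Complex.exp (θ₀ * Complex.I) / (V₀ : ℂ) * (conj (f h) + conj (s h))) ∧
      (∀ h, v h = (V₀ : ℂ) * Complex.exp (θ₀ * Complex.I) *
          (1 + ((V₀ : ℂ) ^ 2)⁻¹ * (∑ k, Z h k * conj (s k)) +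
            ((V₀ : ℂ) ^ 4)⁻¹ * (∑ k, Z h k * lam k))) ∧
      (∀ h, conj (i h) * v h = s h) ∧
      (∀ h, v h = (V₀ : ℂ) * Complex.exp (θ₀ * Complex.I) + ∑ k, Z h k * i k) := by
  -- `maxRowNorm Z` unfolds to the supremum in `hZn`
  subst hZn
  have hV : V₀ ≠ 0 := (pow_ne_zero_iff two_ne_zero).1 (PowerFlow.sq_pos_of_mul_norm_lt hcond).ne'
  obtain ⟨f, hf_norm, hf_fix⟩ := PowerFlow.exists_fixedPoint_mem_closedBall hcond
  set e := Complex.exp (θ₀ * Complex.I)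
  let lam : EuclideanSpace ℂ (Fin n) := toLp 2 fun h => (V₀ : ℂ) ^ 2 * conj (f h)
  let i h := e / V₀ * (conj (f h) + conj (s h))
  have hf h : f h = -((V₀ : ℂ) ^ 2)⁻¹ * ((f h + s h) * ∑ k, Z h k * (conj (f k) + conj (s k))) :=
    (congrArg (· h) hf_fix).symm.trans (PowerFlow.fixedPointMap_apply f h)
  have hlam : ‖lam‖ ≤ V₀ ^ 2 * ‖f‖ :=
    EuclideanSpace.norm_le_mul_of_forall_norm_apply_le (sq_nonneg V₀) fun k => by simp [lam]
  refine ⟨f, lam, i, fun h => V₀ * e + ∑ k, Z h k * i k, hf_norm, hf, fun _ => rfl, ?_,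
    fun _ => rfl, PowerFlow.voltage_eq (fun _ => rfl) (fun _ => rfl),
    fun h => PowerFlow.conj_current_mul_voltage hV
      (Complex.norm_exp_ofReal_mul_I θ₀) (fun _ => rfl) (hf h), fun _ => rfl⟩
  calc ‖lam‖ ≤ V₀ ^ 2 * (4 * PowerFlow.maxRowNorm Z * ‖s‖ ^ 2 / V₀ ^ 2) := by grw [hlam, hf_norm]
    _ = 4 * PowerFlow.maxRowNorm Z * ‖s‖ ^ 2 := by field_simp

/-- Theorem 1 (existence of a practical power flow solution): under `V₀² > 4‖Z‖*‖s‖₂`,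
the fixed point `f` of `G` in the ball of radius `δ = 4‖Z‖*‖s‖₂²/V₀²` yields
`λ = V₀² f̄` with `‖λ‖₂ ≤ 4‖Z‖*‖s‖₂²`, such that
`v = V₀e^{jθ₀}(𝟙 + V₀⁻²Z s̄ + V₀⁻⁴Z λ)` together with
`i = (e^{jθ₀}/V₀)(f̄ + s̄)` satisfies the power flow equations
`diag(ī) v = s` and `v = V₀e^{jθ₀}𝟙 + Z i`. -/
theorem stmt_11 {n : ℕ} (V₀ θ₀ : ℝ) (hV : 0 < V₀)
    (Z : Matrix (Fin n) (Fin n) ℂ) (s : EuclideanSpace ℂ (Fin n))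
    (Zn : ℝ) (hZn : Zn = ⨆ h, ‖(WithLp.equiv 2 (Fin n → ℂ)).symm (Z h)‖)
    (hcond : V₀ ^ 2 > 4 * Zn * ‖s‖) :
    ∃ f lam : EuclideanSpace ℂ (Fin n), ∃ i v : Fin n → ℂ,
      ‖f‖ ≤ 4 * Zn * ‖s‖ ^ 2 / V₀ ^ 2 ∧
      (∀ h, f h = -((V₀ : ℂ) ^ 2)⁻¹ *
          ((f h + s h) * ∑ k, Z h k * (conj (f k) + conj (s k)))) ∧
      (∀ h, lam h = (V₀ : ℂ) ^ 2 * conj (f h)) ∧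
      ‖lam‖ ≤ 4 * Zn * ‖s‖ ^ 2 ∧
      (∀ h, i h = Complex.exp (θ₀ * Complex.I) / (V₀ : ℂ) * (conj (f h) + conj (s h))) ∧
      (∀ h, v h = (V₀ : ℂ) * Complex.exp (θ₀ * Complex.I) *
          (1 + ((V₀ : ℂ) ^ 2)⁻¹ * (∑ k, Z h k * conj (s k)) +
            ((V₀ : ℂ) ^ 4)⁻¹ * (∑ k, Z h k * lam k))) ∧
      (∀ h, conj (i h) * v h = s h) ∧
      (∀ h, v h = (V₀ : ℂ) * Complex.exp (θ₀ * Complex.I) + ∑ k, Z h k * i k) :=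
  stmt_11_general V₀ θ₀ Z s Zn hZn hcond
end

section
/- For p, q ∈ [1,∞] with 1/p+1/q = 1: if V₀ > 0 and V₀² > 4‖Z‖*_q‖s‖_p where ‖Z‖*_q := max_h ‖Z_{h•}‖_q, then the map G(f) = −(1/V₀²)diag(f+s)Z(f̄+s̄) has a unique fixed point in the closed p-norm ball of radius 4‖Z‖*_q‖s‖_p²/V₀². -/
open scoped ENNReal ComplexConjugate NNReal
open Set Function Metric WithLp

/-!
Write the map as `G f = B (f + s) (f + s)` for the `ℝ`-bilinear map `B u v = -V₀⁻² diag(u) Z v̄`.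
Hölder's inequality applied row by row gives `‖B u v‖ ≤ M ‖u‖ ‖v‖` with `M = ‖Z‖*_q / V₀²`.
On the ball of radius `R = 4 M ‖s‖²`, which is at most `‖s‖` because `4 M ‖s‖ < 1`, every
`f + s` has norm at most `2 ‖s‖`; hence `G` maps the ball into itself, and the splitting
`B u u - B v v = B (u - v) u + B v (u - v)` shows that it is Lipschitz there with constant
`4 M ‖s‖ < 1`. Banach's fixed point theorem on the closed ball concludes.
-/

theorem existsUnique_isFixedPt_of_lipschitzOnWith {α : Type*} [MetricSpace α] {s : Set α}
    (hsc : IsComplete s) (hne : s.Nonempty) {f : α → α} (hsf : MapsTo f s s) {K : ℝ≥0}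
    (hK : K < 1) (hf : LipschitzOnWith K f s) : ∃! x, x ∈ s ∧ IsFixedPt f x := by
  have hc : ContractingWith K (hsf.restrict f s s) := ⟨hK, hf.mapsToRestrict hsf⟩
  obtain ⟨x₀, hx₀⟩ := hne
  obtain ⟨x, hxs, hx, -⟩ := hc.exists_fixedPoint' hsc hsf hx₀ (edist_ne_top _ _)
  refine ⟨x, ⟨hxs, hx⟩, fun y ⟨hys, hy⟩ => ?_⟩
  have := hc.fixedPoint_unique' (x := ⟨y, hys⟩) (y := ⟨x, hxs⟩) (Subtype.ext hy) (Subtype.ext hx)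
  exact congrArg Subtype.val this

namespace LinearMap

variable {R E : Type*} [CommSemiring R] [NormedAddCommGroup E] [Module R E]

theorem norm_apply_self_sub_apply_self_le (B : LinearMap.BilinMap R E E) {M : ℝ}
    (hB : ∀ u v, ‖B u v‖ ≤ M * ‖u‖ * ‖v‖) (u v : E) :
    ‖B u u - B v v‖ ≤ M * (‖u‖ + ‖v‖) * ‖u - v‖ := by
  have hsplit : B u u - B v v = B (u - v) u + B v (u - v) := by
    simp only [map_sub, sub_apply]
    abel
  calc ‖B u u - B v v‖ ≤ ‖B (u - v) u‖ + ‖B v (u - v)‖ := hsplit ▸ norm_add_le _ _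
    _ ≤ M * ‖u - v‖ * ‖u‖ + M * ‖v‖ * ‖u - v‖ := add_le_add (hB _ _) (hB _ _)
    _ = M * (‖u‖ + ‖v‖) * ‖u - v‖ := by ring

theorem existsUnique_eq_apply_add_apply_add [CompleteSpace E] (B : LinearMap.BilinMap R E E)
    (s : E) {M : ℝ} (hM : 0 ≤ M) (hB : ∀ u v, ‖B u v‖ ≤ M * ‖u‖ * ‖v‖)
    (hs : 4 * M * ‖s‖ < 1) :
    ∃! f : E, ‖f‖ ≤ 4 * M * ‖s‖ ^ 2 ∧ f = B (f + s) (f + s) := by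
  set K := 4 * M * ‖s‖
  have hK : 0 ≤ K := by positivity
  have hRs : 4 * M * ‖s‖ ^ 2 ≤ ‖s‖ := by nlinarith [norm_nonneg s]
  have hball : ∀ f ∈ closedBall (0 : E) (4 * M * ‖s‖ ^ 2), ‖f + s‖ ≤ 2 * ‖s‖ := fun f hf => by
    rw [mem_closedBall_zero_iff] at hf
    linarith [norm_add_le f s]
  have hmaps : MapsTo (fun f => B (f + s) (f + s)) (closedBall 0 (4 * M * ‖s‖ ^ 2))
      (closedBall 0 (4 * M * ‖s‖ ^ 2)) := fun f hf => by
    rw [mem_closedBall_zero_iff]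
    calc ‖B (f + s) (f + s)‖ ≤ M * ‖f + s‖ * ‖f + s‖ := hB _ _
      _ ≤ M * (2 * ‖s‖) * (2 * ‖s‖) := by gcongr <;> exact hball f hf
      _ = 4 * M * ‖s‖ ^ 2 := by ring
  have hlip : LipschitzOnWith K.toNNReal (fun f => B (f + s) (f + s))
      (closedBall 0 (4 * M * ‖s‖ ^ 2)) := by
    refine LipschitzOnWith.of_dist_le_mul fun f hf g hg => ?_
    rw [Real.coe_toNNReal K hK, dist_eq_norm, dist_eq_norm]
    calc ‖B (f + s) (f + s) - B (g + s) (g + s)‖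
        ≤ M * (‖f + s‖ + ‖g + s‖) * ‖f + s - (g + s)‖ :=
          norm_apply_self_sub_apply_self_le B hB _ _
      _ ≤ M * (2 * ‖s‖ + 2 * ‖s‖) * ‖f - g‖ := by
        rw [add_sub_add_right_eq_sub]
        gcongr <;> exact hball _ ‹_›
      _ = K * ‖f - g‖ := by ring
  have := existsUnique_isFixedPt_of_lipschitzOnWith isClosed_closedBall.isComplete
    ⟨0, mem_closedBall_self (by positivity)⟩ hmaps (by simpa [← NNReal.coe_lt_coe] using hs) hlip
  simpa only [mem_closedBall_zero_iff, IsFixedPt, eq_comm] using this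

end LinearMap

namespace PiLp

variable {ι : Type*} [Fintype ι] {β γ : ι → Type*} [∀ i, SeminormedAddCommGroup (β i)]
  [∀ i, SeminormedAddCommGroup (γ i)]

theorem norm_le_norm_of_forall_norm_apply_le {p : ℝ≥0∞} [Fact (1 ≤ p)] {x y : PiLp p β}
    (h : ∀ i, ‖x i‖ ≤ ‖y i‖) : ‖x‖ ≤ ‖y‖ := by
  rcases eq_or_ne p ∞ with rfl | hp
  · simp only [norm_eq_ciSup]
    exact ciSup_mono (Finite.bddAbove_range _) h
  · have hp0 : 0 < p.toReal := ENNReal.toReal_pos (zero_lt_one.trans_le Fact.out).ne' hp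
    simp only [norm_eq_sum hp0]
    gcongr with i
    exact h i

theorem sum_norm_mul_norm_le_of_top_one (x : PiLp ∞ β) (y : PiLp 1 γ) :
    ∑ i, ‖x i‖ * ‖y i‖ ≤ ‖x‖ * ‖y‖ := by
  rw [norm_eq_of_L1, Finset.mul_sum]
  gcongr with i
  exact norm_apply_le x i

theorem sum_norm_mul_norm_le {p q : ℝ≥0∞} [hpq : p.HolderConjugate q] (x : PiLp p β)
    (y : PiLp q γ) : ∑ i, ‖x i‖ * ‖y i‖ ≤ ‖x‖ * ‖y‖ := by
  rcases eq_or_ne p ∞ with rfl | hp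
  · obtain rfl : q = 1 := (ENNReal.HolderConjugate.eq_top_iff_eq_one ∞ q).mp rfl
    exact sum_norm_mul_norm_le_of_top_one x y
  rcases eq_or_ne q ∞ with rfl | hq
  · obtain rfl : p = 1 := (ENNReal.HolderConjugate.eq_top_iff_eq_one ∞ p).mp rfl
    simpa only [mul_comm] using sum_norm_mul_norm_le_of_top_one y x
  have hpq' := ENNReal.HolderConjugate.toReal_of_ne_top hp hq
  rw [norm_eq_sum hpq'.pos, norm_eq_sum hpq'.symm.pos]
  exact Real.inner_le_Lp_mul_Lq_of_nonneg Finset.univ hpq' (fun i _ => norm_nonneg _)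
    (fun i _ => norm_nonneg _)

end PiLp

namespace Matrix

variable {ι : Type*} [Fintype ι]

noncomputable def diagMulVecStar (p : ℝ≥0∞) (Z : Matrix ι ι ℂ) :
    LinearMap.BilinMap ℝ (PiLp p (fun _ : ι => ℂ)) (PiLp p (fun _ : ι => ℂ)) :=
  LinearMap.mk₂ ℝ (fun u v => toLp p fun h => u h * (Z *ᵥ star (ofLp v)) h)
    (fun _ _ _ => by ext; simp [add_mul])
    (fun _ _ _ => by ext; simp [mul_assoc])
    (fun _ _ _ => by ext; simp [mulVec_add, mul_add])
    (fun _ _ _ => by ext; simp [mulVec_smul, mul_left_comm])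

theorem diagMulVecStar_apply (p : ℝ≥0∞) (Z : Matrix ι ι ℂ) (u v : PiLp p (fun _ : ι => ℂ))
    (h : ι) : diagMulVecStar p Z u v h = u h * ∑ k, Z h k * conj (v k) := rfl

theorem norm_diagMulVecStar_apply_le {p q : ℝ≥0∞} [Fact (1 ≤ p)] [p.HolderConjugate q]
    (Z : Matrix ι ι ℂ) {M : ℝ} (hM : 0 ≤ M) (hZ : ∀ h, ‖toLp q (Z h)‖ ≤ M)
    (u v : PiLp p (fun _ : ι => ℂ)) :
    ‖diagMulVecStar p Z u v‖ ≤ M * ‖u‖ * ‖v‖ := by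
  have hrow : ∀ h, ‖∑ k, Z h k * conj (v k)‖ ≤ M * ‖v‖ := fun h =>
    calc ‖∑ k, Z h k * conj (v k)‖ ≤ ∑ k, ‖Z h k‖ * ‖v k‖ :=
          (norm_sum_le _ _).trans_eq (by simp only [norm_mul, Complex.norm_conj])
      _ ≤ ‖toLp q (Z h)‖ * ‖v‖ := PiLp.sum_norm_mul_norm_le (toLp q (Z h)) v
      _ ≤ M * ‖v‖ := by gcongr; exact hZ h
  calc ‖diagMulVecStar p Z u v‖ ≤ ‖(M * ‖v‖) • u‖ :=
        PiLp.norm_le_norm_of_forall_norm_apply_le fun h => by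
          rw [diagMulVecStar_apply, PiLp.smul_apply, norm_smul, norm_mul, mul_comm,
            Real.norm_of_nonneg (by positivity)]
          exact mul_le_mul_of_nonneg_right (hrow h) (norm_nonneg _)
    _ = M * ‖u‖ * ‖v‖ := by rw [norm_smul, Real.norm_of_nonneg (by positivity)]; ring

end Matrix

theorem stmt_16_general {n : ℕ} (p q : ℝ≥0∞) (hpq : 1 / p + 1 / q = 1) (V₀ : ℝ)
    (Z : Matrix (Fin n) (Fin n) ℂ) (s : PiLp p (fun _ : Fin n => ℂ))
    (Zn : ℝ) (hZn : Zn = ⨆ h, ‖(WithLp.equiv q (Fin n → ℂ)).symm (Z h)‖)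
    (hcond : V₀ ^ 2 > 4 * Zn * ‖s‖) :
    ∃! f : PiLp p (fun _ : Fin n => ℂ),
      ‖f‖ ≤ 4 * Zn * ‖s‖ ^ 2 / V₀ ^ 2 ∧
      f = (WithLp.equiv p (Fin n → ℂ)).symm (fun h =>
        -((V₀ : ℂ) ^ 2)⁻¹ * ((f h + s h) * ∑ k, Z h k * (conj (f k) + conj (s k)))) := by
  have : p.HolderConjugate q := ENNReal.holderConjugate_iff.mpr (by simpa only [one_div] using hpq)
  have : Fact (1 ≤ p) := ⟨ENNReal.HolderConjugate.one_le p q⟩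
  have : Fact (1 ≤ q) := ⟨ENNReal.HolderConjugate.one_le q p⟩
  have hZ : ∀ h, ‖toLp q (Z h)‖ ≤ Zn := fun h =>
    hZn ▸ le_ciSup (f := fun h => ‖toLp q (Z h)‖) (Finite.bddAbove_range _) h
  have hZn0 : 0 ≤ Zn := hZn ▸ Real.iSup_nonneg fun h => norm_nonneg _
  have hV2 : 0 < V₀ ^ 2 := lt_of_le_of_lt (by positivity) hcond
  let B := (-(V₀ ^ 2)⁻¹ : ℝ) • Z.diagMulVecStar p
  have hB : ∀ u v, ‖B u v‖ ≤ Zn / V₀ ^ 2 * ‖u‖ * ‖v‖ := fun u v => by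
    rw [LinearMap.smul_apply, LinearMap.smul_apply, norm_smul, norm_neg, norm_inv,
      Real.norm_of_nonneg hV2.le, div_eq_inv_mul, mul_assoc, mul_assoc, ← mul_assoc Zn]
    gcongr
    exact Z.norm_diagMulVecStar_apply_le hZn0 hZ u v
  have hs : 4 * (Zn / V₀ ^ 2) * ‖s‖ < 1 := by
    rw [mul_div_assoc', div_mul_eq_mul_div, div_lt_one hV2]; exact hcond
  refine (existsUnique_congr fun f => ?_).mp
    (LinearMap.existsUnique_eq_apply_add_apply_add B s (by positivity) hB hs)
  have hBf : B (f + s) (f + s) = toLp p (fun h =>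
      -((V₀ : ℂ) ^ 2)⁻¹ * ((f h + s h) * ∑ k, Z h k * (conj (f k) + conj (s k)))) := by
    ext h
    rw [LinearMap.smul_apply, LinearMap.smul_apply, PiLp.smul_apply, Matrix.diagMulVecStar_apply]
    simp only [PiLp.add_apply, map_add, Complex.real_smul]
    push_cast
    ring
  rw [hBf, mul_div_assoc', div_mul_eq_mul_div]
  rfl

/-- p-norm generalization of Theorem 1: for conjugate exponents `p, q ∈ [1,∞]`, if
`V₀² > 4‖Z‖*_q‖s‖_p` then `G(f) = −(1/V₀²) diag(f+s) Z (f̄+s̄)` has a unique fixed point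
in the closed p-norm ball of radius `4‖Z‖*_q‖s‖_p²/V₀²`. -/
theorem stmt_16 {n : ℕ} (p q : ℝ≥0∞) [Fact (1 ≤ p)] [Fact (1 ≤ q)]
    (hpq : 1 / p + 1 / q = 1) (V₀ : ℝ) (hV : 0 < V₀)
    (Z : Matrix (Fin n) (Fin n) ℂ) (s : PiLp p (fun _ : Fin n => ℂ))
    (Zn : ℝ) (hZn : Zn = ⨆ h, ‖(WithLp.equiv q (Fin n → ℂ)).symm (Z h)‖)
    (hcond : V₀ ^ 2 > 4 * Zn * ‖s‖) :
    ∃! f : PiLp p (fun _ : Fin n => ℂ),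
      ‖f‖ ≤ 4 * Zn * ‖s‖ ^ 2 / V₀ ^ 2 ∧
      f = (WithLp.equiv p (Fin n → ℂ)).symm (fun h =>
        -((V₀ : ℂ) ^ 2)⁻¹ * ((f h + s h) * ∑ k, Z h k * (conj (f k) + conj (s k)))) :=
  stmt_16_general p q hpq V₀ Z s Zn hZn hcond
end
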